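/- arXiv:1611.02434 — 5 statements merged into one kernel-verified Lean document; each statement's English description precedes it below -/
import Mathlib

section
/- If a block tri-diagonal nonnegative matrix Q = tridiag(A_{-1}, A_0, A_1) (with identical blocks on all rows, including the boundary row) is irreducible, then both A_{-1} and A_1 are nonzero matrices and the sum A_* = A_{-1} + A_0 + A_1 is irreducible. -/
open scoped ENNReal
open Classical

/-- `n`-th power of a nonnegative matrix indexed by an arbitrary type, with
products defined via sums in `[0,∞]`. -/

noncomputable def matPow {ι : Type*} (A : ι → ι → ℝ≥0∞) : ℕ → ι → ι → ℝ≥0∞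
  | 0 => fun i j => if i = j then 1 else 0
  | n + 1 => fun i j => ∑' k, A i k * matPow A n k j

/-- Irreducibility: for every pair of indices some power has a positive entry. -/
def IsIrred {ι : Type*} (A : ι → ι → ℝ≥0∞) : Prop :=
  ∀ a b, ∃ n, 1 ≤ n ∧ 0 < matPow A n a b

/-!
A power `matPow A n` has a nonzero `(a, b)` entry exactly when the support graph of `A` has a
path of length `n` from `a` to `b`, so irreducibility is strong connectivity of that graph.
An edge of the graph of `Q` moves the level by `+1`, `0` or `-1` through `A₁`, `A₀` or `A₋₁`.
If `A₁ = 0` the level never increases along a path, so level `1` is unreachable from level `0`;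
symmetrically for `A₋₁`. Projecting a path of `Q` onto the phase coordinate gives a path in the
graph of `A₋₁ + A₀ + A₁`.
-/

open Relation

section SupportGraph

variable {ι : Type*} (A : ι → ι → ℝ≥0∞)

lemma matPow_zero_ne_zero_iff {i j : ι} : matPow A 0 i j ≠ 0 ↔ i = j := by
  simp [matPow]

lemma matPow_succ_ne_zero_iff {n : ℕ} {i j : ι} :
    matPow A (n + 1) i j ≠ 0 ↔ ∃ k, A i k ≠ 0 ∧ matPow A n k j ≠ 0 := by
  simp [matPow, ENNReal.tsum_eq_zero]

lemma exists_matPow_ne_zero_iff_reflTransGen {i j : ι} :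
    (∃ n, matPow A n i j ≠ 0) ↔ ReflTransGen (fun a b => A a b ≠ 0) i j := by
  constructor
  · rintro ⟨n, h⟩
    induction n generalizing i with
    | zero => rw [(matPow_zero_ne_zero_iff A).1 h]
    | succ n ih =>
      obtain ⟨k, hik, hkj⟩ := (matPow_succ_ne_zero_iff A).1 h
      exact .head hik (ih hkj)
  · intro h
    induction h using ReflTransGen.head_induction_on with
    | refl => exact ⟨0, (matPow_zero_ne_zero_iff A).2 rfl⟩
    | head hik _ ih =>
      obtain ⟨n, hn⟩ := ih
      exact ⟨n + 1, (matPow_succ_ne_zero_iff A).2 ⟨_, hik, hn⟩⟩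

lemma isIrred_iff_transGen :
    IsIrred A ↔ ∀ a b, TransGen (fun i j => A i j ≠ 0) a b := by
  refine forall₂_congr fun a b => ?_
  rw [TransGen.head'_iff]
  constructor
  · rintro ⟨n, hn, hpos⟩
    obtain ⟨n, rfl⟩ := Nat.exists_eq_add_of_le' hn
    obtain ⟨k, hak, hkb⟩ := (matPow_succ_ne_zero_iff A).1 hpos.ne'
    exact ⟨k, hak, (exists_matPow_ne_zero_iff_reflTransGen A).1 ⟨n, hkb⟩⟩
  · rintro ⟨k, hak, hkb⟩
    obtain ⟨n, hn⟩ := (exists_matPow_ne_zero_iff_reflTransGen A).2 hkb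
    exact ⟨n + 1, Nat.le_add_left 1 n,
      pos_iff_ne_zero.2 ((matPow_succ_ne_zero_iff A).2 ⟨k, hak, hn⟩)⟩

end SupportGraph

/-- Indices are pairs `(level, phase)`. -/
noncomputable def blockTridiag (Am1 A0 A1 : ℕ → ℕ → ℝ≥0∞) : ℕ × ℕ → ℕ × ℕ → ℝ≥0∞ :=
  fun x y => if y.1 = x.1 + 1 then A1 x.2 y.2 else if y.1 = x.1 then A0 x.2 y.2
    else if y.1 + 1 = x.1 then Am1 x.2 y.2 else 0

section BlockTridiag

variable {Am1 A0 A1 : ℕ → ℕ → ℝ≥0∞}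

lemma blockTridiag_ne_zero {x y : ℕ × ℕ} (h : blockTridiag Am1 A0 A1 x y ≠ 0) :
    (y.1 = x.1 + 1 ∧ A1 x.2 y.2 ≠ 0) ∨ (y.1 = x.1 ∧ A0 x.2 y.2 ≠ 0) ∨
      (y.1 + 1 = x.1 ∧ Am1 x.2 y.2 ≠ 0) := by
  unfold blockTridiag at h
  split_ifs at h <;> simp_all

lemma transGen_blockTridiag_fst_le_of_A1_eq_zero (hA1 : A1 = 0) {x y : ℕ × ℕ}
    (h : TransGen (fun a b => blockTridiag Am1 A0 A1 a b ≠ 0) x y) : y.1 ≤ x.1 := by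
  have hstep : ∀ a b, blockTridiag Am1 A0 A1 a b ≠ 0 → a.1 ≥ b.1 := by
    intro a b hab
    rcases blockTridiag_ne_zero hab with ⟨-, h⟩ | ⟨h, -⟩ | ⟨h, -⟩
    · exact absurd (by simp [hA1]) h
    all_goals omega
  simpa [transGen_eq_self] using TransGen.lift (p := GE.ge) Prod.fst hstep _ _ h

lemma transGen_blockTridiag_le_fst_of_Am1_eq_zero (hAm1 : Am1 = 0) {x y : ℕ × ℕ}
    (h : TransGen (fun a b => blockTridiag Am1 A0 A1 a b ≠ 0) x y) : x.1 ≤ y.1 := by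
  have hstep : ∀ a b, blockTridiag Am1 A0 A1 a b ≠ 0 → a.1 ≤ b.1 := by
    intro a b hab
    rcases blockTridiag_ne_zero hab with ⟨h, -⟩ | ⟨h, -⟩ | ⟨-, h⟩
    · omega
    · omega
    · exact absurd (by simp [hAm1]) h
  simpa [transGen_eq_self] using TransGen.lift (p := LE.le) Prod.fst hstep _ _ h

lemma transGen_snd_of_transGen_blockTridiag {x y : ℕ × ℕ}
    (h : TransGen (fun a b => blockTridiag Am1 A0 A1 a b ≠ 0) x y) :
    TransGen (fun k l => Am1 k l + A0 k l + A1 k l ≠ 0) x.2 y.2 := by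
  refine TransGen.lift Prod.snd (fun a b hab => ?_) _ _ h
  rcases blockTridiag_ne_zero hab with ⟨-, h⟩ | ⟨-, h⟩ | ⟨-, h⟩ <;> simp [Function.onFun, h]

end BlockTridiag

/-- If the one-sided block tri-diagonal matrix `Q = tridiag(A₋₁, A₀, A₁)` (with the
same blocks on every block row, including the boundary row) is irreducible, then
`A₋₁ ≠ 0`, `A₁ ≠ 0` and `A₋₁ + A₀ + A₁` is irreducible. -/
theorem stmt0 (Am1 A0 A1 : ℕ → ℕ → ℝ≥0∞)
    (Q : ℕ × ℕ → ℕ × ℕ → ℝ≥0∞)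
    (hQ : ∀ i k j l, Q (i, k) (j, l) =
      if j = i + 1 then A1 k l else if j = i then A0 k l
      else if j + 1 = i then Am1 k l else 0)
    (hirr : IsIrred Q) :
    Am1 ≠ 0 ∧ A1 ≠ 0 ∧ IsIrred (fun i j => Am1 i j + A0 i j + A1 i j) := by
  obtain rfl : Q = blockTridiag Am1 A0 A1 := funext₂ fun x y => hQ _ _ _ _
  rw [isIrred_iff_transGen] at hirr ⊢
  refine ⟨fun hAm1 => ?_, fun hA1 => ?_, fun a b => ?_⟩
  · simpa using transGen_blockTridiag_le_fst_of_Am1_eq_zero hAm1 (hirr (1, 0) (0, 0))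
  · simpa using transGen_blockTridiag_fst_le_of_A1_eq_zero hA1 (hirr (0, 0) (1, 0))
  · exact transGen_snd_of_transGen_blockTridiag (hirr (0, a) (0, b))
end

section
/- Suppose all products of A_{-1}, A_0, A_1 are entrywise finite. Define G = Σ_{n≥1} Σ_{i_{(n)} ∈ I_{D,1,n}} A_{i_1}⋯A_{i_n} (values in [0,∞]). Then G satisfies the matrix quadratic equation G = A_{-1} + A_0 G + A_1 G², where both sides are computed in [0,∞] (equality holds even when both sides are infinite). -/
/-!
By its first step, a walk with steps in `{-1, 0, 1}` that first reaches `-1` at its end is either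
`[-1]`, or `0` followed by such a walk, or `1` followed by a walk first reaching `-2` at its end;
cutting the latter at its first visit to `-1` splits it uniquely into two walks first reaching
`-1`. Through this bijection the series defining `G` becomes `A₋₁ + A₀ G + A₁ G²`, because
products of `[0, ∞]`-valued matrices distribute over arbitrary sums.
-/

open scoped ENNReal
open Classical

abbrev Mx := ℕ → ℕ → ℝ≥0∞

noncomputable def mprod (A B : Mx) : Mx := fun i j => ∑' k, A i k * B k j

def isPM1 (L : List ℤ) : Prop := ∀ x ∈ L, x = -1 ∨ x = 0 ∨ x = 1

/-- `I_{D,m,n}` with `n = L.length`. -/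
def ID (m : ℕ) (L : List ℤ) : Prop :=
  isPM1 L ∧ (∀ k, 1 ≤ k → k ≤ L.length - 1 → -(m : ℤ) + 1 ≤ (L.take k).sum) ∧
    L.sum = -(m : ℤ)

/-- `I_n`: partial sums nonnegative and total sum `0`. -/
def IFlat (L : List ℤ) : Prop :=
  isPM1 L ∧ (∀ k, 1 ≤ k → k ≤ L.length - 1 → 0 ≤ (L.take k).sum) ∧ L.sum = 0

/-- `I_{U,1,n}`: partial sums `≥ 1` and total sum `1`. -/
def IU (L : List ℤ) : Prop :=
  isPM1 L ∧ (∀ k, 1 ≤ k → k ≤ L.length - 1 → 1 ≤ (L.take k).sum) ∧ L.sum = 1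

/-- The matrix associated with an index in `{-1,0,1}`. -/
noncomputable def pick (Am1 A0 A1 : Mx) (x : ℤ) : Mx :=
  if x = -1 then Am1 else if x = 0 then A0 else A1

/-- Product `A_{i₁} A_{i₂} ⋯ A_{i_n}` along an index sequence. -/
noncomputable def seqProd (Am1 A0 A1 : Mx) : List ℤ → Mx
  | [] => fun i j => if i = j then 1 else 0
  | x :: L => mprod (pick Am1 A0 A1 x) (seqProd Am1 A0 A1 L)

section MatrixProduct

theorem mprod_assoc (A B C : Mx) : mprod (mprod A B) C = mprod A (mprod B C) := by
  funext i j
  simp only [mprod, ← ENNReal.tsum_mul_left, ← ENNReal.tsum_mul_right, mul_assoc]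
  exact ENNReal.tsum_comm

theorem mprod_one_left (B : Mx) : mprod (fun i j => if i = j then 1 else 0) B = B := by
  funext i j
  simp [mprod, ite_mul]

theorem mprod_one_right (A : Mx) : mprod A (fun i j => if i = j then 1 else 0) = A := by
  funext i j
  simp [mprod, mul_ite]

theorem mprod_tsum_right {ι : Type*} (A : Mx) (F : ι → Mx) :
    mprod A (fun i j => ∑' t, F t i j) = fun i j => ∑' t, mprod A (F t) i j := by
  funext i j
  simp only [mprod, ← ENNReal.tsum_mul_left]
  exact ENNReal.tsum_comm

theorem mprod_tsum_left {ι : Type*} (F : ι → Mx) (B : Mx) :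
    mprod (fun i j => ∑' t, F t i j) B = fun i j => ∑' t, mprod (F t) B i j := by
  funext i j
  simp only [mprod, ← ENNReal.tsum_mul_right]
  exact ENNReal.tsum_comm

end MatrixProduct

section SeqProd

variable (Am1 A0 A1 : Mx)

theorem seqProd_append (L₁ L₂ : List ℤ) :
    seqProd Am1 A0 A1 (L₁ ++ L₂) = mprod (seqProd Am1 A0 A1 L₁) (seqProd Am1 A0 A1 L₂) := by
  induction L₁ with
  | nil => exact (mprod_one_left _).symm
  | cons x L ih => rw [List.cons_append, seqProd, seqProd, ih, mprod_assoc]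

theorem seqProd_singleton (x : ℤ) : seqProd Am1 A0 A1 [x] = pick Am1 A0 A1 x :=
  mprod_one_right _

end SeqProd

/-- Unlike in `ID m`, the prefix condition also covers the empty prefix, so that
`firstPassage_cons` holds for every `m : ℤ`. -/
def FirstPassage (m : ℤ) (L : List ℤ) : Prop :=
  isPM1 L ∧ (∀ k < L.length, -m < (L.take k).sum) ∧ L.sum = -m

section FirstPassage

variable {a b m x : ℤ} {L L₁ L₂ L₁' L₂' : List ℤ}

theorem firstPassage_nil : FirstPassage m [] ↔ m = 0 := by
  simp [FirstPassage, isPM1, neg_eq_zero, eq_comm]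

theorem firstPassage_cons :
    FirstPassage m (x :: L) ↔ (x = -1 ∨ x = 0 ∨ x = 1) ∧ 0 < m ∧ FirstPassage (m + x) L := by
  simp only [FirstPassage, isPM1, List.forall_mem_cons, List.length_cons,
    Nat.forall_lt_succ_left, List.take_zero, List.sum_nil, List.take_succ_cons, List.sum_cons]
  constructor
  · rintro ⟨⟨hx, hL⟩, ⟨hm, hk⟩, hs⟩
    exact ⟨hx, by omega, hL, fun k hk' => by have := hk k hk'; omega, by omega⟩
  · rintro ⟨hx, hm, hL, hk, hs⟩
    exact ⟨⟨hx, hL⟩, ⟨by omega, fun k hk' => by have := hk k hk'; omega⟩, by omega⟩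

theorem FirstPassage.nonneg (h : FirstPassage m L) : 0 ≤ m := by
  cases L with
  | nil => exact (firstPassage_nil.1 h).ge
  | cons x L => exact (firstPassage_cons.1 h).2.1.le

theorem firstPassage_zero : FirstPassage 0 L ↔ L = [] := by
  cases L with
  | nil => simp [firstPassage_nil]
  | cons x L => simp [firstPassage_cons]

theorem FirstPassage.append (h₁ : FirstPassage a L₁) (h₂ : FirstPassage b L₂) :
    FirstPassage (a + b) (L₁ ++ L₂) := by
  induction L₁ generalizing a with
  | nil => rwa [firstPassage_nil.1 h₁, zero_add]
  | cons x L ih =>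
    obtain ⟨hx, ha, hL⟩ := firstPassage_cons.1 h₁
    rw [List.cons_append, firstPassage_cons, add_right_comm]
    exact ⟨hx, by linarith [h₂.nonneg], ih hL⟩

theorem FirstPassage.exists_append (h : FirstPassage (a + b) L) (ha : 0 ≤ a) (hb : 0 ≤ b) :
    ∃ L₁ L₂, FirstPassage a L₁ ∧ FirstPassage b L₂ ∧ L = L₁ ++ L₂ := by
  induction L generalizing a with
  | nil =>
    have hab := firstPassage_nil.1 h
    exact ⟨[], [], firstPassage_nil.2 (by omega), firstPassage_nil.2 (by omega), rfl⟩
  | cons x L ih =>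
    rcases ha.eq_or_lt with rfl | ha
    · exact ⟨[], x :: L, firstPassage_nil.2 rfl, by rwa [zero_add] at h, rfl⟩
    obtain ⟨hx, -, hL⟩ := firstPassage_cons.1 h
    rw [add_right_comm] at hL
    obtain ⟨L₁, L₂, h₁, h₂, rfl⟩ := ih hL (by omega)
    exact ⟨x :: L₁, L₂, firstPassage_cons.2 ⟨hx, ha, h₁⟩, h₂, rfl⟩

theorem FirstPassage.append_inj (h₁ : FirstPassage a L₁) (h₁' : FirstPassage a L₁')
    (h : L₁ ++ L₂ = L₁' ++ L₂') : L₁ = L₁' ∧ L₂ = L₂' := by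
  induction L₁ generalizing a L₁' with
  | nil =>
    obtain rfl := firstPassage_nil.1 h₁
    obtain rfl := firstPassage_zero.1 h₁'
    exact ⟨rfl, h⟩
  | cons x L ih =>
    obtain ⟨-, ha, hL⟩ := firstPassage_cons.1 h₁
    cases L₁' with
    | nil => exact absurd (firstPassage_nil.1 h₁') ha.ne'
    | cons x' L' =>
      rw [List.cons_append, List.cons_append, List.cons.injEq] at h
      obtain ⟨rfl, h⟩ := h
      obtain ⟨rfl, rfl⟩ := ih hL (firstPassage_cons.1 h₁').2.2 h
      exact ⟨rfl, rfl⟩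

end FirstPassage

theorem ID_iff_firstPassage {m : ℕ} (hm : 1 ≤ m) {L : List ℤ} :
    ID m L ↔ FirstPassage m L := by
  refine and_congr_right fun _ => and_congr_left fun _ => ⟨fun h k hk => ?_, fun h k hk hk' => ?_⟩
  · rcases Nat.eq_zero_or_pos k with rfl | hk0
    · simp only [List.take_zero, List.sum_nil]; omega
    · have := h k hk0 (by omega); omega
  · have := h k (by omega); omega

local notation "Walk₁" => {L : List ℤ // FirstPassage 1 L}

def firstStepMap : Unit ⊕ Walk₁ ⊕ Walk₁ × Walk₁ → Walk₁
  | .inl _ =>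
    ⟨[-1], firstPassage_cons.2 ⟨by norm_num, one_pos, firstPassage_nil.2 (by norm_num)⟩⟩
  | .inr (.inl L) =>
    ⟨0 :: L.1, firstPassage_cons.2 ⟨by norm_num, one_pos, by simpa using L.2⟩⟩
  | .inr (.inr (L₁, L₂)) =>
    ⟨1 :: (L₁.1 ++ L₂.1), firstPassage_cons.2 ⟨by norm_num, one_pos, L₁.2.append L₂.2⟩⟩

theorem firstStepMap_bijective : Function.Bijective firstStepMap := by
  constructor
  · rintro (u | L | p) (u' | L' | p') h <;>
      simp only [firstStepMap, Subtype.mk.injEq, List.cons.injEq] at h <;>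
      norm_num at h
    · rfl
    · exact congrArg (Sum.inr ∘ Sum.inl) (Subtype.ext h)
    · obtain ⟨h₁, h₂⟩ := p.1.2.append_inj p'.1.2 h
      exact congrArg (Sum.inr ∘ Sum.inr) (Prod.ext (Subtype.ext h₁) (Subtype.ext h₂))
  · rintro ⟨_ | ⟨x, L⟩, h⟩
    · exact absurd (firstPassage_nil.1 h) one_ne_zero
    obtain ⟨hx | hx | hx, -, hL⟩ := firstPassage_cons.1 h <;> subst hx
    · rw [add_neg_cancel, firstPassage_zero] at hL
      subst hL
      exact ⟨.inl (), rfl⟩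
    · exact ⟨.inr (.inl ⟨L, by simpa using hL⟩), rfl⟩
    · obtain ⟨L₁, L₂, h₁, h₂, rfl⟩ :=
        FirstPassage.exists_append (a := 1) (b := 1) hL zero_le_one zero_le_one
      exact ⟨.inr (.inr (⟨L₁, h₁⟩, ⟨L₂, h₂⟩)), rfl⟩

theorem tsum_firstPassage_one (f : List ℤ → ℝ≥0∞) :
    ∑' L : Walk₁, f L =
      f [-1] + ∑' L : Walk₁, f (0 :: L) + ∑' p : Walk₁ × Walk₁, f (1 :: (p.1.1 ++ p.2.1)) := by
  rw [← (Equiv.ofBijective _ firstStepMap_bijective).tsum_eq,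
    ENNReal.summable.tsum_sum ENNReal.summable, ENNReal.summable.tsum_sum ENNReal.summable,
    add_assoc]
  simp [firstStepMap]

theorem stmt5_general (Am1 A0 A1 : Mx)
    (G : Mx)
    (hG : G = fun i j => ∑' L : {L : List ℤ // ID 1 L}, seqProd Am1 A0 A1 L.1 i j) :
    ∀ i j, G i j = Am1 i j + mprod A0 G i j + mprod A1 (mprod G G) i j := by
  have hG₁ : G = fun i j => ∑' L : Walk₁, seqProd Am1 A0 A1 L.1 i j := by
    rw [hG]
    funext i j
    exact (Equiv.subtypeEquivRight fun L => by exact_mod_cast ID_iff_firstPassage le_rfl).tsum_eq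
      (fun L : Walk₁ => seqProd Am1 A0 A1 L.1 i j)
  have hGG : mprod G G =
      fun i j => ∑' p : Walk₁ × Walk₁, seqProd Am1 A0 A1 (p.1.1 ++ p.2.1) i j := by
    rw [hG₁, mprod_tsum_left]
    simp only [mprod_tsum_right, seqProd_append, ENNReal.tsum_prod']
  intro i j
  rw [hGG, mprod_tsum_right, hG₁, mprod_tsum_right]
  beta_reduce
  rw [tsum_firstPassage_one (fun L => seqProd Am1 A0 A1 L i j), seqProd_singleton]
  norm_num [seqProd, pick]

/-- `G = Σ_{n≥1} Σ_{i_{(n)} ∈ I_{D,1,n}} A_{i₁}⋯A_{i_n}` satisfies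
`G = A₋₁ + A₀ G + A₁ G²`, with both sides computed in `[0,∞]`. -/
theorem stmt5 (Am1 A0 A1 : Mx)
    (hfin : ∀ L : List ℤ, isPM1 L → ∀ i j, seqProd Am1 A0 A1 L i j ≠ ⊤)
    (G : Mx)
    (hG : G = fun i j => ∑' L : {L : List ℤ // ID 1 L}, seqProd Am1 A0 A1 L.1 i j) :
    ∀ i j, G i j = Am1 i j + mprod A0 G i j + mprod A1 (mprod G G) i j :=
  stmt5_general Am1 A0 A1 G hG
end

section
/- Let A_* be irreducible with all iterates finite, and let γ* = inf_{z>0} cp(A_*(z))^{−1} with A_*(z) = z^{−1}A_{-1}+A_0+zA_1. If there exists z* > 0 and a positive vector u with uᵀ A_*(z*) ≤ γ* uᵀ and γ* ≤ 1, then the iterates X_n of the iteration X_0 = O, X_n = X_{n−1}² A_{-1} + X_{n−1} A_0 + A_1 satisfy uᵀ X_n ≤ (z*)^{−1} uᵀ for all n, and hence the minimal nonnegative solution R to X = X² A_{-1} + X A_0 + A_1 exists. -/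
open scoped ENNReal
open Classical

/-- Convergence parameter: `cp(M) = sup{z ≥ 0 : Σ_k z^k M^k entrywise finite}`. -/
noncomputable def cp {ι : Type*} (A : ι → ι → ℝ≥0∞) : ℝ≥0∞ :=
  sSup {z : ℝ≥0∞ | ∀ i j, (∑' n : ℕ, z ^ n * matPow A n i j) ≠ ⊤}

/-- `A_*(z) = z⁻¹ A₋₁ + A₀ + z A₁` for `z > 0`. -/
noncomputable def AsZ (Am1 A0 A1 : Mx) (z : ℝ) : Mx := fun i j =>
  (ENNReal.ofReal z)⁻¹ * Am1 i j + A0 i j + ENNReal.ofReal z * A1 i j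

/-- The iteration `X₀ = O`, `X_n = X_{n-1}² A₋₁ + X_{n-1} A₀ + A₁`. -/
noncomputable def iterR (Am1 A0 A1 : Mx) : ℕ → Mx
  | 0 => fun _ _ => 0
  | n + 1 => fun i j =>
      mprod (mprod (iterR Am1 A0 A1 n) (iterR Am1 A0 A1 n)) Am1 i j +
        mprod (iterR Am1 A0 A1 n) A0 i j + A1 i j

/-- `X` is the minimal nonnegative (entrywise finite) solution of
`X = X² A₋₁ + X A₀ + A₁`. -/
def IsMinSolR (Am1 A0 A1 X : Mx) : Prop :=
  (∀ i j, X i j ≠ ⊤) ∧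
  (∀ i j, X i j = mprod (mprod X X) Am1 i j + mprod X A0 i j + A1 i j) ∧
  (∀ Y : Mx, (∀ i j, Y i j ≠ ⊤) →
    (∀ i j, Y i j = mprod (mprod Y Y) Am1 i j + mprod Y A0 i j + A1 i j) →
    ∀ i j, X i j ≤ Y i j)

/-! The bound `uᵀ X ≤ z⁻¹ uᵀ` (with `z = z*`) propagates along the iteration:
`uᵀ (X² A₋₁ + X A₀ + A₁) ≤ z⁻² uᵀ A₋₁ + z⁻¹ uᵀ A₀ + uᵀ A₁ = z⁻¹ uᵀ A_*(z) ≤ z⁻¹ γ* uᵀ ≤ z⁻¹ uᵀ`.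
On matrices over `ℝ≥0∞` the map `X ↦ X² A₋₁ + X A₀ + A₁` is monotone and ω-continuous, so by
Kleene's theorem the increasing iterates converge to its least fixed point, which is the minimal
solution as soon as it is finite; finiteness follows from the bound since `u` is positive. -/

lemma ENNReal.iSup_mul_iSup_of_monotone {ι : Type*} [Preorder ι] [IsDirectedOrder ι]
    {f g : ι → ℝ≥0∞} (hf : Monotone f) (hg : Monotone g) :
    (⨆ a, f a) * (⨆ a, g a) = ⨆ a, f a * g a := by
  simp only [ENNReal.iSup_mul, ENNReal.mul_iSup]
  refine le_antisymm (iSup₂_le fun j i => ?_) (iSup_le fun a => le_iSup₂_of_le a a le_rfl)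
  obtain ⟨k, hik, hjk⟩ := exists_ge_ge i j
  exact le_iSup_of_le k (mul_le_mul' (hf hik) (hg hjk))

lemma ENNReal.tsum_iSup_of_monotone {α ι : Type*} [Preorder ι] [IsDirectedOrder ι]
    {f : ι → α → ℝ≥0∞} (hf : Monotone f) :
    ∑' k, ⨆ n, f n k = ⨆ n, ∑' k, f n k := by
  simp only [ENNReal.tsum_eq_iSup_sum,
    ENNReal.finsetSum_iSup_of_monotone fun k _ _ h => hf h k]
  exact iSup_comm

lemma mprod_mono {A A' B B' : Mx} (hA : A ≤ A') (hB : B ≤ B') : mprod A B ≤ mprod A' B' :=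
  fun i j => ENNReal.tsum_le_tsum fun k => mul_le_mul' (hA i k) (hB k j)

lemma mprod_iSup_of_monotone {F G : ℕ → Mx} (hF : Monotone F) (hG : Monotone G) :
    mprod (⨆ n, F n) (⨆ n, G n) = ⨆ n, mprod (F n) (G n) := by
  ext i j
  simp only [mprod, iSup_apply]
  rw [tsum_congr fun k =>
    ENNReal.iSup_mul_iSup_of_monotone (fun _ _ h => hF h i k) (fun _ _ h => hG h k j)]
  exact ENNReal.tsum_iSup_of_monotone fun _ _ h k => mul_le_mul' (hF h i k) (hG h k j)

lemma tsum_mul_mprod (u : ℕ → ℝ≥0∞) (M N : Mx) (j : ℕ) :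
    ∑' i, u i * mprod M N i j = ∑' k, (∑' i, u i * M i k) * N k j := by
  simp only [mprod, ← ENNReal.tsum_mul_left, ← ENNReal.tsum_mul_right, mul_assoc]
  exact ENNReal.tsum_comm

lemma tsum_mul_mprod_le {u : ℕ → ℝ≥0∞} {c : ℝ≥0∞} {M : Mx}
    (hM : ∀ k, ∑' i, u i * M i k ≤ c * u k) (N : Mx) (j : ℕ) :
    ∑' i, u i * mprod M N i j ≤ c * ∑' k, u k * N k j := by
  rw [tsum_mul_mprod, ← ENNReal.tsum_mul_left]
  exact ENNReal.tsum_le_tsum fun k => by rw [← mul_assoc]; exact mul_le_mul' (hM k) le_rfl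

lemma tsum_mul_AsZ (Am1 A0 A1 : Mx) (zs : ℝ) (u : ℕ → ℝ≥0∞) (j : ℕ) :
    ∑' i, u i * AsZ Am1 A0 A1 zs i j = (ENNReal.ofReal zs)⁻¹ * ∑' i, u i * Am1 i j +
      ∑' i, u i * A0 i j + ENNReal.ofReal zs * ∑' i, u i * A1 i j := by
  simp only [AsZ, mul_add, ENNReal.tsum_add, mul_left_comm (u _), ENNReal.tsum_mul_left]

section QuadraticIteration

variable (Am1 A0 A1 : Mx)

noncomputable def quadStep : Mx →o Mx where
  toFun X := mprod (mprod X X) Am1 + mprod X A0 + A1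
  monotone' _ _ h := add_le_add_left
    (add_le_add (mprod_mono (mprod_mono h h) le_rfl) (mprod_mono h le_rfl)) _

lemma quadStep_apply (X : Mx) : quadStep Am1 A0 A1 X = mprod (mprod X X) Am1 + mprod X A0 + A1 :=
  rfl

lemma iterR_succ (n : ℕ) : iterR Am1 A0 A1 (n + 1) = quadStep Am1 A0 A1 (iterR Am1 A0 A1 n) :=
  rfl

lemma iterR_eq_iterate_bot (n : ℕ) : iterR Am1 A0 A1 n = (quadStep Am1 A0 A1)^[n] ⊥ := by
  induction n with
  | zero => rfl
  | succ n ih => rw [iterR_succ, ih, Function.iterate_succ_apply']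

lemma quadStep_iSup_of_monotone {F : ℕ → Mx} (hF : Monotone F) :
    quadStep Am1 A0 A1 (⨆ n, F n) = ⨆ n, quadStep Am1 A0 A1 (F n) := by
  have hsq : Monotone fun n => mprod (F n) (F n) := fun _ _ h => mprod_mono (hF h) (hF h)
  have hAm1 := mprod_iSup_of_monotone hsq (monotone_const (c := Am1))
  have hA0 := mprod_iSup_of_monotone hF (monotone_const (c := A0))
  simp only [iSup_const] at hAm1 hA0
  ext i j
  simp only [quadStep_apply, mprod_iSup_of_monotone hF hF, hAm1, hA0, Pi.add_apply, iSup_apply]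
  rw [ENNReal.iSup_add_iSup_of_monotone, ENNReal.iSup_add]
  · exact fun _ _ h => mprod_mono (hsq h) le_rfl i j
  · exact fun _ _ h => mprod_mono (hF h) le_rfl i j

open OmegaCompletePartialOrder in
lemma quadStep_ωScottContinuous : ωScottContinuous (quadStep Am1 A0 A1) :=
  ωScottContinuous.of_map_ωSup_of_orderHom fun c => by
    rw [← ωSup_eq_of_isLUB isLUB_iSup, ← ωSup_eq_of_isLUB isLUB_iSup]
    exact quadStep_iSup_of_monotone Am1 A0 A1 c.monotone

lemma lfp_quadStep : (quadStep Am1 A0 A1).lfp = ⨆ n, iterR Am1 A0 A1 n := by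
  simp only [fixedPoints.lfp_eq_sSup_iterate _ (quadStep_ωScottContinuous Am1 A0 A1),
    iterR_eq_iterate_bot]

lemma isMinSolR_lfp_quadStep (hfin : ∀ i j, (quadStep Am1 A0 A1).lfp i j ≠ ⊤) :
    IsMinSolR Am1 A0 A1 (quadStep Am1 A0 A1).lfp :=
  ⟨hfin, fun i j => congrFun₂ (quadStep Am1 A0 A1).map_lfp.symm i j,
    fun _ _ hY => (quadStep Am1 A0 A1).lfp_le (funext₂ hY).ge⟩

variable {Am1 A0 A1}

lemma tsum_mul_quadStep_le {zs : ℝ} (hzs : 0 < zs) {u : ℕ → ℝ≥0∞} {X : Mx}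
    (hX : ∀ k, ∑' i, u i * X i k ≤ (ENNReal.ofReal zs)⁻¹ * u k) (j : ℕ) :
    ∑' i, u i * quadStep Am1 A0 A1 X i j ≤
      (ENNReal.ofReal zs)⁻¹ * ∑' i, u i * AsZ Am1 A0 A1 zs i j := by
  set z := ENNReal.ofReal zs
  have hz : z⁻¹ * z = 1 := ENNReal.inv_mul_cancel (by simpa [z] using hzs) ENNReal.ofReal_ne_top
  have hX2 : ∀ k, ∑' i, u i * mprod X X i k ≤ (z⁻¹ * z⁻¹) * u k := fun k =>
    (tsum_mul_mprod_le hX X k).trans <| by rw [mul_assoc]; exact mul_le_mul' le_rfl (hX k)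
  simp only [quadStep_apply, Pi.add_apply, mul_add, ENNReal.tsum_add, tsum_mul_AsZ]
  calc _ ≤ (z⁻¹ * z⁻¹) * ∑' i, u i * Am1 i j + z⁻¹ * ∑' i, u i * A0 i j + ∑' i, u i * A1 i j :=
        add_le_add_left (add_le_add (tsum_mul_mprod_le hX2 Am1 j) (tsum_mul_mprod_le hX A0 j)) _
    _ = _ := by rw [← mul_assoc z⁻¹ z, hz, one_mul]; ring

theorem tsum_mul_iterR_le {zs : ℝ} (hzs : 0 < zs) {u : ℕ → ℝ≥0∞}
    (hu : ∀ j, ∑' i, u i * AsZ Am1 A0 A1 zs i j ≤ u j) (n j : ℕ) :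
    ∑' i, u i * iterR Am1 A0 A1 n i j ≤ (ENNReal.ofReal zs)⁻¹ * u j := by
  induction n generalizing j with
  | zero => simp [iterR]
  | succ n ih =>
    rw [iterR_succ]
    exact (tsum_mul_quadStep_le hzs ih j).trans (mul_le_mul' le_rfl (hu j))

end QuadraticIteration

lemma iSup_apply_ne_top_of_tsum_mul_le {X : ℕ → Mx} {u : ℕ → ℝ≥0∞} {c : ℝ≥0∞}
    (hu : ∀ i, u i ≠ 0) (hc : ∀ j, c * u j ≠ ⊤) (h : ∀ n j, ∑' i, u i * X n i j ≤ c * u j)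
    (i j : ℕ) : (⨆ n, X n) i j ≠ ⊤ := by
  have hle : u i * (⨆ n, X n) i j ≤ c * u j := by
    simp only [iSup_apply, ENNReal.mul_iSup]
    exact iSup_le fun n => (ENNReal.le_tsum i).trans (h n j)
  intro htop
  rw [htop, ENNReal.mul_top (hu i)] at hle
  exact hc j (top_le_iff.mp hle)

theorem stmt13_general (Am1 A0 A1 : Mx)
    (γ : ℝ≥0∞)
    (hγ : γ ≤ 1)
    (zs : ℝ) (hzs : 0 < zs)
    (u : ℕ → ℝ≥0∞) (hu : ∀ i, 0 < u i ∧ u i ≠ ⊤)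
    (huA : ∀ j, (∑' i, u i * AsZ Am1 A0 A1 zs i j) ≤ γ * u j) :
    (∀ n j, (∑' i, u i * iterR Am1 A0 A1 n i j) ≤ (ENNReal.ofReal zs)⁻¹ * u j) ∧
    ∃ R, IsMinSolR Am1 A0 A1 R := by
  have hsuper : ∀ j, ∑' i, u i * AsZ Am1 A0 A1 zs i j ≤ u j := fun j =>
    (huA j).trans (mul_le_of_le_one_left' hγ)
  have hbound := tsum_mul_iterR_le hzs hsuper
  refine ⟨hbound, _, isMinSolR_lfp_quadStep Am1 A0 A1 ?_⟩
  rw [lfp_quadStep]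
  exact iSup_apply_ne_top_of_tsum_mul_le (fun i => (hu i).1.ne')
    (fun j => ENNReal.mul_ne_top (by simpa using hzs) (hu j).2) hbound

/-- If `A_*` is irreducible with finite iterates, `γ* = inf_{z>0} cp(A_*(z))⁻¹ ≤ 1`
and there is `z* > 0` and a positive vector `u` with `uᵀ A_*(z*) ≤ γ* uᵀ`, then
`uᵀ X_n ≤ (z*)⁻¹ uᵀ` for all `n`, and the minimal nonnegative solution `R` of
`X = X² A₋₁ + X A₀ + A₁` exists. -/
theorem stmt13 (Am1 A0 A1 : Mx)
    (hirr : IsIrred (fun i j => Am1 i j + A0 i j + A1 i j))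
    (hfin : ∀ n i j, matPow (fun i j => Am1 i j + A0 i j + A1 i j) n i j ≠ ⊤)
    (γ : ℝ≥0∞)
    (hγdef : γ = ⨅ z ∈ Set.Ioi (0 : ℝ), (cp (AsZ Am1 A0 A1 z))⁻¹)
    (hγ : γ ≤ 1)
    (zs : ℝ) (hzs : 0 < zs)
    (u : ℕ → ℝ≥0∞) (hu : ∀ i, 0 < u i ∧ u i ≠ ⊤)
    (huA : ∀ j, (∑' i, u i * AsZ Am1 A0 A1 zs i j) ≤ γ * u j) :
    (∀ n j, (∑' i, u i * iterR Am1 A0 A1 n i j) ≤ (ENNReal.ofReal zs)⁻¹ * u j) ∧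
    ∃ R, IsMinSolR Am1 A0 A1 R :=
  stmt13_general Am1 A0 A1 γ hγ zs hzs u hu huA
end

section
/- If X* is a nonnegative solution of X = X² A_{-1} + X A_0 + A_1 and there exist γ₀ > 0 and a nonnegative nonzero vector u with uᵀ X* = γ₀ uᵀ, then uᵀ A_*(γ₀^{−1}) = uᵀ, and consequently γ* := inf_{z>0} cp(A_*(z))^{−1} ≤ cp(A_*(γ₀^{−1}))^{−1} ≤ 1. -/
/-!
Multiplying `X = X² A₋₁ + X A₀ + A₁` on the left by `uᵀ` and using `uᵀ X = γ₀ uᵀ` twice gives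
`γ₀ uᵀ = γ₀² uᵀ A₋₁ + γ₀ uᵀ A₀ + uᵀ A₁`; dividing by `γ₀` is `uᵀ A_*(γ₀⁻¹) = uᵀ`.
An invariant vector of an irreducible matrix is strictly positive, and `uᵀ Mⁿ = uᵀ` then bounds
`Mⁿ i j ≤ u j / u i` uniformly in `n`, so `Σ zⁿ Mⁿ` converges for every `z < 1`, i.e. `cp M ≥ 1`.
-/

open scoped ENNReal
open Classical

section Matrix

variable {ι : Type*}

theorem tsum_mul_tsum_mul_assoc (u : ι → ℝ≥0∞) (A B : ι → ι → ℝ≥0∞) (j : ι) :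
    ∑' i, u i * ∑' k, A i k * B k j = ∑' k, (∑' i, u i * A i k) * B k j := by
  simp_rw [← ENNReal.tsum_mul_left, ← ENNReal.tsum_mul_right, mul_assoc]
  exact ENNReal.tsum_comm

theorem pow_mul_matPow_le {c : ℝ≥0∞} {A B : ι → ι → ℝ≥0∞} (h : ∀ i j, c * A i j ≤ B i j)
    (n : ℕ) (i j : ι) : c ^ n * matPow A n i j ≤ matPow B n i j := by
  induction n generalizing i with
  | zero => simp only [matPow, pow_zero, one_mul, le_refl]
  | succ n ih =>
    calc c ^ (n + 1) * matPow A (n + 1) i j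
        = ∑' k, c * A i k * (c ^ n * matPow A n k j) := by
          simp only [matPow, ← ENNReal.tsum_mul_left]
          exact tsum_congr fun k => by ring
      _ ≤ matPow B (n + 1) i j := ENNReal.tsum_le_tsum fun k => mul_le_mul' (h i k) (ih k)

theorem IsIrred.of_mul_le {c : ℝ≥0∞} {A B : ι → ι → ℝ≥0∞} (hA : IsIrred A) (hc : c ≠ 0)
    (h : ∀ i j, c * A i j ≤ B i j) : IsIrred B := fun a b => by
  obtain ⟨n, hn, hpos⟩ := hA a b
  exact ⟨n, hn, (ENNReal.mul_pos (pow_ne_zero n hc) hpos.ne').trans_le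
    (pow_mul_matPow_le h n a b)⟩

variable {M : ι → ι → ℝ≥0∞} {u : ι → ℝ≥0∞}

theorem tsum_mul_matPow_of_invariant (hu : ∀ j, ∑' i, u i * M i j = u j) (n : ℕ) (j : ι) :
    ∑' i, u i * matPow M n i j = u j := by
  induction n generalizing j with
  | zero => simp [matPow]
  | succ n ih =>
    simp only [matPow]
    rw [tsum_mul_tsum_mul_assoc]
    simp only [hu, ih]

theorem IsIrred.pos_of_invariant (hM : IsIrred M) (hu0 : u ≠ 0)
    (hu : ∀ j, ∑' i, u i * M i j = u j) (i : ι) : u i ≠ 0 := by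
  obtain ⟨a, ha⟩ := Function.ne_iff.1 hu0
  obtain ⟨n, -, hn⟩ := hM a i
  rw [← tsum_mul_matPow_of_invariant hu n i]
  exact (ENNReal.mul_pos ha hn.ne').trans_le (ENNReal.le_tsum a) |>.ne'

theorem matPow_le_of_invariant (hu : ∀ j, ∑' i, u i * M i j = u j) (hpos : u i ≠ 0)
    (hfin : u i ≠ ⊤) (n : ℕ) (j : ι) : matPow M n i j ≤ (u i)⁻¹ * u j := by
  rw [← ENNReal.mul_le_iff_le_inv hpos hfin, ← tsum_mul_matPow_of_invariant hu n j]
  exact ENNReal.le_tsum i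

theorem one_le_cp_of_invariant (hM : IsIrred M) (hu0 : u ≠ 0) (hufin : ∀ i, u i ≠ ⊤)
    (hu : ∀ j, ∑' i, u i * M i j = u j) : 1 ≤ cp M := by
  refine le_of_forall_lt fun b hb => ?_
  obtain ⟨z, hbz, hz1⟩ := exists_between hb
  refine hbz.trans_le (le_sSup fun i j => ?_)
  have hpos := hM.pos_of_invariant hu0 hu i
  refine ne_top_of_le_ne_top ?_ (ENNReal.tsum_le_tsum fun n =>
    mul_le_mul_right (matPow_le_of_invariant hu hpos (hufin i) n j) (z ^ n))
  rw [ENNReal.tsum_mul_right, ENNReal.tsum_geometric]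
  exact ENNReal.mul_ne_top (ENNReal.inv_ne_top.2 (tsub_pos_of_lt hz1).ne')
    (ENNReal.mul_ne_top (ENNReal.inv_ne_top.2 hpos) (hufin j))

end Matrix

theorem tsum_mul_mprod_of_eigen {u : ℕ → ℝ≥0∞} {X : Mx} {g : ℝ≥0∞}
    (huX : ∀ j, ∑' i, u i * X i j = g * u j) (B : Mx) (j : ℕ) :
    ∑' i, u i * mprod X B i j = g * ∑' k, u k * B k j := by
  simp only [mprod, tsum_mul_tsum_mul_assoc, huX, mul_assoc, ENNReal.tsum_mul_left]

theorem invariant_of_eigen_of_quadratic {Am1 A0 A1 X : Mx} {u : ℕ → ℝ≥0∞} {g : ℝ≥0∞}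
    (hg0 : g ≠ 0) (hgt : g ≠ ⊤)
    (hXeq : ∀ i j, X i j = mprod (mprod X X) Am1 i j + mprod X A0 i j + A1 i j)
    (huX : ∀ j, ∑' i, u i * X i j = g * u j) (j : ℕ) :
    ∑' i, u i * (g * Am1 i j + A0 i j + g⁻¹ * A1 i j) = u j := by
  have huXX : ∀ j, ∑' i, u i * mprod X X i j = g ^ 2 * u j := fun j => by
    rw [tsum_mul_mprod_of_eigen huX, huX, ← mul_assoc, sq]
  have hexpand : g * u j
      = g ^ 2 * ∑' k, u k * Am1 k j + g * ∑' k, u k * A0 k j + ∑' k, u k * A1 k j := by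
    rw [← huX, ← tsum_mul_mprod_of_eigen huX, ← tsum_mul_mprod_of_eigen huXX,
      ← ENNReal.tsum_add, ← ENNReal.tsum_add]
    exact tsum_congr fun i => by rw [hXeq i j]; ring
  simp only [mul_add, ENNReal.tsum_add, ENNReal.tsum_mul_left, mul_left_comm (u _)]
  refine (ENNReal.mul_right_inj hg0 hgt).1 ?_
  rw [hexpand, mul_add, mul_add, ← mul_assoc g g⁻¹, ENNReal.mul_inv_cancel hg0 hgt, one_mul]
  ring

theorem AsZ_inv (Am1 A0 A1 : Mx) {γ : ℝ} (hγ : 0 < γ) (i j : ℕ) :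
    AsZ Am1 A0 A1 γ⁻¹ i j
      = ENNReal.ofReal γ * Am1 i j + A0 i j + (ENNReal.ofReal γ)⁻¹ * A1 i j := by
  simp only [AsZ, ENNReal.ofReal_inv_of_pos hγ, inv_inv]

theorem isIrred_AsZ {Am1 A0 A1 : Mx} (hirr : IsIrred (fun i j => Am1 i j + A0 i j + A1 i j))
    {z : ℝ} (hz : 0 < z) : IsIrred (AsZ Am1 A0 A1 z) := by
  set w := ENNReal.ofReal z
  have hw0 : w ≠ 0 := (ENNReal.ofReal_pos.2 hz).ne'
  refine hirr.of_mul_le (c := min 1 (min w⁻¹ w))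
    (lt_min one_pos (lt_min (ENNReal.inv_pos.2 ENNReal.ofReal_ne_top) hw0.bot_lt)).ne'
    fun i j => ?_
  rw [mul_add, mul_add]
  refine add_le_add (add_le_add ?_ ?_) ?_
  · exact mul_le_mul_left ((min_le_right _ _).trans (min_le_left _ _)) _
  · exact (mul_le_mul_left (min_le_left _ _) _).trans (one_mul _).le
  · exact mul_le_mul_left ((min_le_right _ _).trans (min_le_right _ _)) _

theorem stmt14_general (Am1 A0 A1 : Mx)
    (hirr : IsIrred (fun i j => Am1 i j + A0 i j + A1 i j))
    (X : Mx)
    (hXeq : ∀ i j, X i j = mprod (mprod X X) Am1 i j + mprod X A0 i j + A1 i j)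
    (γ0 : ℝ) (hγ0 : 0 < γ0)
    (u : ℕ → ℝ≥0∞) (hune : u ≠ 0) (hufin : ∀ i, u i ≠ ⊤)
    (huX : ∀ j, (∑' i, u i * X i j) = ENNReal.ofReal γ0 * u j) :
    (∀ j, (∑' i, u i * AsZ Am1 A0 A1 γ0⁻¹ i j) = u j) ∧
    (⨅ z ∈ Set.Ioi (0 : ℝ), (cp (AsZ Am1 A0 A1 z))⁻¹) ≤ (cp (AsZ Am1 A0 A1 γ0⁻¹))⁻¹ ∧
    (cp (AsZ Am1 A0 A1 γ0⁻¹))⁻¹ ≤ 1 := by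
  have hinv : ∀ j, ∑' i, u i * AsZ Am1 A0 A1 γ0⁻¹ i j = u j := fun j => by
    simp only [AsZ_inv Am1 A0 A1 hγ0]
    exact invariant_of_eigen_of_quadratic (ENNReal.ofReal_pos.2 hγ0).ne' ENNReal.ofReal_ne_top
      hXeq huX j
  have hcp : 1 ≤ cp (AsZ Am1 A0 A1 γ0⁻¹) :=
    one_le_cp_of_invariant (isIrred_AsZ hirr (inv_pos.2 hγ0)) hune hufin hinv
  exact ⟨hinv, iInf₂_le γ0⁻¹ (inv_pos.2 hγ0), ENNReal.inv_le_one.2 hcp⟩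

/-- If `X*` is a nonnegative (finite) solution of `X = X² A₋₁ + X A₀ + A₁` and
`uᵀ X* = γ₀ uᵀ` for some `γ₀ > 0` and nonnegative nonzero `u`, then
`uᵀ A_*(γ₀⁻¹) = uᵀ` and consequently
`γ* = inf_{z>0} cp(A_*(z))⁻¹ ≤ cp(A_*(γ₀⁻¹))⁻¹ ≤ 1`. -/
theorem stmt14 (Am1 A0 A1 : Mx)
    (hirr : IsIrred (fun i j => Am1 i j + A0 i j + A1 i j))
    (hfin : ∀ n i j, matPow (fun i j => Am1 i j + A0 i j + A1 i j) n i j ≠ ⊤)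
    (X : Mx) (hXfin : ∀ i j, X i j ≠ ⊤)
    (hXeq : ∀ i j, X i j = mprod (mprod X X) Am1 i j + mprod X A0 i j + A1 i j)
    (γ0 : ℝ) (hγ0 : 0 < γ0)
    (u : ℕ → ℝ≥0∞) (hune : u ≠ 0) (hufin : ∀ i, u i ≠ ⊤)
    (huX : ∀ j, (∑' i, u i * X i j) = ENNReal.ofReal γ0 * u j) :
    (∀ j, (∑' i, u i * AsZ Am1 A0 A1 γ0⁻¹ i j) = u j) ∧
    (⨅ z ∈ Set.Ioi (0 : ℝ), (cp (AsZ Am1 A0 A1 z))⁻¹) ≤ (cp (AsZ Am1 A0 A1 γ0⁻¹))⁻¹ ∧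
    (cp (AsZ Am1 A0 A1 γ0⁻¹))⁻¹ ≤ 1 :=
  stmt14_general Am1 A0 A1 hirr X hXeq γ0 hγ0 u hune hufin huX
end

section
/- Assume P irreducible and γ* ≤ 1, and suppose there exist z* > 0 and positive vector u* with (u*)ᵀ A_*(z*) ≤ γ* (u*)ᵀ and (u*)ᵀ R ≤ (z*)^{−1}(u*)ᵀ. Then (u*)ᵀ H ≤ γ* (u*)ᵀ where H = R A_{-1} + A_0, and hence cp(H) ≥ (γ*)^{−1}. -/
open scoped ENNReal
open Classical

/-- `X` is the minimal nonnegative finite solution of `X = A₋₁ + A₀ X + A₁ X²`. -/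
def IsMinSolG (Am1 A0 A1 X : Mx) : Prop :=
  (∀ i j, X i j ≠ ⊤) ∧
  (∀ i j, X i j = Am1 i j + mprod A0 X i j + mprod A1 (mprod X X) i j) ∧
  (∀ Y : Mx, (∀ i j, Y i j ≠ ⊤) →
    (∀ i j, Y i j = Am1 i j + mprod A0 Y i j + mprod A1 (mprod Y Y) i j) →
    ∀ i j, X i j ≤ Y i j)

/-- If `P` is irreducible, `γ* ≤ 1`, and `z* > 0`, a positive vector `u*` satisfy
`(u*)ᵀ A_*(z*) ≤ γ* (u*)ᵀ` and `(u*)ᵀ R ≤ (z*)⁻¹ (u*)ᵀ`, then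
`(u*)ᵀ H ≤ γ* (u*)ᵀ` for `H = R A₋₁ + A₀`, whence `cp(H) ≥ (γ*)⁻¹`. -/
theorem stmt16 (Am1 A0 A1 : Mx)
    (P : ℤ × ℕ → ℤ × ℕ → ℝ≥0∞)
    (hP : ∀ (i : ℤ) (k : ℕ) (j : ℤ) (l : ℕ), P (i, k) (j, l) =
      if j = i + 1 then A1 k l else if j = i then A0 k l
      else if j = i - 1 then Am1 k l else 0)
    (hPirr : IsIrred P)
    (hfin : ∀ n i j, matPow (fun i j => Am1 i j + A0 i j + A1 i j) n i j ≠ ⊤)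
    (γ : ℝ≥0∞) (hγdef : γ = ⨅ z ∈ Set.Ioi (0 : ℝ), (cp (AsZ Am1 A0 A1 z))⁻¹)
    (hγ : γ ≤ 1)
    (R : Mx) (hR : IsMinSolR Am1 A0 A1 R)
    (zs : ℝ) (hzs : 0 < zs)
    (u : ℕ → ℝ≥0∞) (hu : ∀ i, 0 < u i ∧ u i ≠ ⊤)
    (huA : ∀ j, (∑' i, u i * AsZ Am1 A0 A1 zs i j) ≤ γ * u j)
    (huR : ∀ j, (∑' i, u i * R i j) ≤ (ENNReal.ofReal zs)⁻¹ * u j) :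
    (∀ j, (∑' i, u i * (mprod R Am1 i j + A0 i j)) ≤ γ * u j) ∧
    γ⁻¹ ≤ cp (fun i j => mprod R Am1 i j + A0 i j) := by

  have part1 : ∀ j, (∑' i, u i * (mprod R Am1 i j + A0 i j)) ≤ γ * u j := by
    intro j
    have h1 : (∑' i, u i * mprod R Am1 i j) ≤
        ∑' k, ((ENNReal.ofReal zs)⁻¹ * u k) * Am1 k j := by
      calc ∑' i, u i * mprod R Am1 i j
          = ∑' i, ∑' k, (u i * R i k) * Am1 k j := by
            simp only [mprod, ← ENNReal.tsum_mul_left, mul_assoc]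
        _ = ∑' k, (∑' i, u i * R i k) * Am1 k j := by
            rw [ENNReal.tsum_comm]
            simp only [ENNReal.tsum_mul_right]
        _ ≤ ∑' k, ((ENNReal.ofReal zs)⁻¹ * u k) * Am1 k j := by
            exact ENNReal.tsum_le_tsum fun k => mul_le_mul_left (huR k) _
    calc ∑' i, u i * (mprod R Am1 i j + A0 i j)
        = (∑' i, u i * mprod R Am1 i j) + ∑' i, u i * A0 i j := by
          simp only [mul_add, ENNReal.tsum_add]
      _ ≤ (∑' k, ((ENNReal.ofReal zs)⁻¹ * u k) * Am1 k j) + ∑' k, u k * A0 k j :=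
          add_le_add h1 le_rfl
      _ = ∑' k, (((ENNReal.ofReal zs)⁻¹ * u k) * Am1 k j + u k * A0 k j) := by
          rw [ENNReal.tsum_add]
      _ ≤ ∑' k, u k * AsZ Am1 A0 A1 zs k j := by
          refine ENNReal.tsum_le_tsum fun k => ?_
          simp only [AsZ, mul_add]
          refine le_add_right (add_le_add ?_ le_rfl)
          exact le_of_eq (by ring)
      _ ≤ γ * u j := huA j
  refine ⟨part1, ?_⟩
  set H : Mx := fun i j => mprod R Am1 i j + A0 i j with hH
  have key : ∀ n j, (∑' i, u i * matPow H n i j) ≤ γ ^ n * u j := by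
    intro n
    induction n with
    | zero =>
        intro j
        rw [tsum_eq_single j (by intro b hb; simp [matPow, hb])]
        simp [matPow]
    | succ n ih =>
        intro j
        calc ∑' i, u i * matPow H (n + 1) i j
            = ∑' i, ∑' k, (u i * H i k) * matPow H n k j := by
              simp only [matPow, ← ENNReal.tsum_mul_left, mul_assoc]
          _ = ∑' k, (∑' i, u i * H i k) * matPow H n k j := by
              rw [ENNReal.tsum_comm]
              simp only [ENNReal.tsum_mul_right]
          _ ≤ ∑' k, (γ * u k) * matPow H n k j := by
              exact ENNReal.tsum_le_tsum fun k => mul_le_mul_left (part1 k) _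
          _ = γ * ∑' k, u k * matPow H n k j := by
              simp only [mul_assoc, ENNReal.tsum_mul_left]
          _ ≤ γ * (γ ^ n * u j) := mul_le_mul_right (ih j) _
          _ = γ ^ (n + 1) * u j := by ring
  have hγtop : γ ≠ ⊤ := (hγ.trans_lt (by simp)).ne
  have mem : ∀ w, w < γ⁻¹ → w ∈ {z : ℝ≥0∞ | ∀ i j, (∑' n : ℕ, z ^ n * matPow H n i j) ≠ ⊤} := by
    intro w hw i j
    have hui0 : u i ≠ 0 := (hu i).1.ne'
    have hwγ : w * γ < 1 := by
      rcases eq_or_ne γ 0 with h0 | h0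
      · simp [h0]
      · calc w * γ < γ⁻¹ * γ := (by rw [mul_comm w, mul_comm γ⁻¹]; exact ENNReal.mul_lt_mul_right h0 hγtop hw)
          _ = 1 := ENNReal.inv_mul_cancel h0 hγtop
    have hb : ∀ n, w ^ n * matPow H n i j ≤ (w * γ) ^ n * ((u i)⁻¹ * u j) := by
      intro n
      have h1 : u i * matPow H n i j ≤ γ ^ n * u j :=
        le_trans (ENNReal.le_tsum i) (key n j)
      have h2 : matPow H n i j ≤ (u i)⁻¹ * (γ ^ n * u j) := by
        calc matPow H n i j = (u i)⁻¹ * (u i * matPow H n i j) := by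
              rw [← mul_assoc, ENNReal.inv_mul_cancel hui0 (hu i).2, one_mul]
          _ ≤ (u i)⁻¹ * (γ ^ n * u j) := mul_le_mul_right h1 _
      calc w ^ n * matPow H n i j ≤ w ^ n * ((u i)⁻¹ * (γ ^ n * u j)) :=
            mul_le_mul_right h2 _
        _ = (w * γ) ^ n * ((u i)⁻¹ * u j) := by rw [mul_pow]; ring
    refine ne_top_of_le_ne_top ?_ (ENNReal.tsum_le_tsum hb)
    rw [ENNReal.tsum_mul_right]
    refine ENNReal.mul_ne_top ?_
      (ENNReal.mul_ne_top (ENNReal.inv_ne_top.mpr hui0) (hu j).2)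
    rw [ENNReal.tsum_geometric]
    exact ENNReal.inv_ne_top.mpr (tsub_pos_of_lt hwγ).ne'
  show γ⁻¹ ≤ cp H
  unfold cp
  by_contra hcon
  push_neg at hcon
  obtain ⟨c, hc1, hc2⟩ := exists_between hcon
  exact absurd (le_sSup (mem c hc2)) (not_le.mpr hc1)
end
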